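/- arXiv:1503.08781 — 8 statements merged into one kernel-verified Lean document; each statement's English description precedes it below -/
import Mathlib

section
/- Let I be a linear order and let χ be an infinite cardinal with χ < |I|, where |I| denotes the cardinality of the underlying set of I. Then there exists i ∈ I such that the initial segment {j ∈ I : j ≤ i} has cardinality at least χ and the final segment {j ∈ I : i ≤ j} has cardinality at least χ. -/
/-! If no point had both segments of size `≥ χ`, then `I` would be covered by the points with a
small initial segment and those with a small final segment. Each of these sets has size `≤ χ`:
otherwise pick `χ` of its points; the union of their (small) initial segments has size `≤ χ`, so
some point of the set lies above all of them, and its initial segment has size `≥ χ`. -/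

universe u

open Cardinal Set

variable {α : Type u} [LinearOrder α] {χ : Cardinal.{u}}

theorem Cardinal.mk_le_of_forall_mk_Iic_lt (hχ : ℵ₀ ≤ χ) {s : Set α}
    (hs : ∀ a ∈ s, #(Iic a) < χ) : #s ≤ χ := by
  by_contra! hlarge
  obtain ⟨t, hts, htχ⟩ := le_mk_iff_exists_subset.mp hlarge.le
  have hunion : #(⋃ b ∈ t, Iic b) ≤ χ :=
    calc #(⋃ b ∈ t, Iic b) ≤ #t * ⨆ b : t, #(Iic b.1) := mk_biUnion_le _ _
      _ ≤ χ * χ := by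
        gcongr
        · exact htχ.le
        · exact ciSup_le' fun b => (hs b (hts b.2)).le
      _ = χ := mul_eq_self hχ
  obtain ⟨a, has, ha⟩ : (s \ ⋃ b ∈ t, Iic b).Nonempty := by
    by_contra! hsub
    rw [sdiff_eq_empty] at hsub
    exact (hunion.trans_lt hlarge).not_ge (mk_le_mk_of_subset hsub)
  have hta : t ⊆ Iic a := fun b hb => le_of_lt <| not_le.mp fun hab => ha (mem_biUnion hb hab)
  exact (hs a has).not_ge (htχ ▸ mk_le_mk_of_subset hta)

theorem Cardinal.mk_le_of_forall_mk_Ici_lt (hχ : ℵ₀ ≤ χ) {s : Set α}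
    (hs : ∀ a ∈ s, #(Ici a) < χ) : #s ≤ χ :=
  mk_le_of_forall_mk_Iic_lt (α := αᵒᵈ) hχ hs

/-- Lemma `lo-cut`: in a linear order `I` of cardinality greater than an infinite
cardinal `χ`, there is a point `i` whose initial segment `{j | j ≤ i}` and final
segment `{j | i ≤ j}` both have cardinality at least `χ`. -/
theorem stmt_0 {I : Type u} [LinearOrder I] (χ : Cardinal.{u})
    (hχ : Cardinal.aleph0 ≤ χ) (hI : χ < Cardinal.mk I) :
    ∃ i : I, χ ≤ Cardinal.mk ↥{j : I | j ≤ i} ∧ χ ≤ Cardinal.mk ↥{j : I | i ≤ j} := by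
  by_contra! hsmall
  have hcover : {i : I | #(Iic i) < χ} ∪ {i | #(Ici i) < χ} = Set.univ :=
    eq_univ_of_forall fun i => (lt_or_ge #(Iic i) χ).imp id (hsmall i)
  have hA := mk_le_of_forall_mk_Iic_lt hχ (s := {i : I | #(Iic i) < χ}) fun _ h => h
  have hB := mk_le_of_forall_mk_Ici_lt hχ (s := {i : I | #(Ici i) < χ}) fun _ h => h
  refine hI.not_ge ?_
  calc #I = #(Set.univ : Set I) := mk_univ.symm
    _ ≤ #{i : I | #(Iic i) < χ} + #{i : I | #(Ici i) < χ} := hcover ▸ mk_union_le _ _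
    _ ≤ χ + χ := add_le_add hA hB
    _ = χ := add_eq_self hχ
end

section
/- Let λ be an uncountable cardinal. Then λ = ℶ_λ if and only if for every infinite cardinal μ < λ one has ℶ_{(2^μ)⁺} < λ. -/
/-!
If `λ = ℶ_λ` with `λ` uncountable, then `λ` is a strong limit, so `(2^μ)⁺ < λ` and
`h(μ) < ℶ_λ = λ` for `μ < λ`. Conversely, assuming `h(μ) < λ` for infinite `μ < λ`, we show
`ℶ_α < λ` for all `α < λ` by induction, which gives `ℶ_λ ≤ λ`. At successors,
`ℶ_{α+1} = 2^{ℶ_α} < h(ℶ_α)`. At a limit `β < λ`, if `ℶ_β ≥ λ` then `h(ℶ_γ) < ℶ_β` forces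
`(2^{ℶ_γ})⁺ < β` for every `γ < β`, so `ℶ_β ≤ |β| < λ`, a contradiction.
-/

universe u

open Cardinal Order

namespace Cardinal

noncomputable def hanf (μ : Cardinal.{u}) : Cardinal.{u} :=
  ℶ_ (succ ((2 : Cardinal.{u}) ^ μ)).ord

theorem two_power_lt_hanf (μ : Cardinal.{u}) : 2 ^ μ < hanf μ :=
  (lt_succ _).trans_le (le_beth_ord _)

theorem hanf_lt_of_eq_beth_ord {lam μ : Cardinal.{u}} (hlam : ℵ₀ < lam)
    (hfix : lam = ℶ_ lam.ord) (hμ : μ < lam) : hanf μ < lam := by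
  have hstrong : IsStrongLimit lam :=
    hfix ▸ isStrongLimit_beth.2 (isSuccLimit_ord hlam.le).isSuccPrelimit
  have hsucc : succ ((2 : Cardinal.{u}) ^ μ) < lam :=
    hstrong.isSuccLimit.succ_lt (hstrong.isStrongPrelimit hμ)
  rw [hfix]
  exact beth_lt_beth.2 (ord_lt_ord.2 (hfix ▸ hsucc))

theorem two_power_lt_card_of_hanf_lt_beth {κ : Cardinal.{u}} {β : Ordinal.{u}}
    (h : hanf κ < ℶ_ β) : 2 ^ κ < β.card :=
  (lt_succ _).trans_le (ord_le.1 (beth_lt_beth.1 h).le)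

theorem beth_lt_of_isSuccLimit {lam : Cardinal.{u}}
    (H : ∀ μ : Cardinal.{u}, ℵ₀ ≤ μ → μ < lam → hanf μ < lam)
    {β : Ordinal.{u}} (hβ : IsSuccLimit β) (hβlam : β < lam.ord)
    (ih : ∀ γ < β, ℶ_ γ < lam) : ℶ_ β < lam := by
  by_contra! hle
  have hbound : ℶ_ β ≤ β.card := by
    refine (isNormal_beth.le_iff_forall_le hβ).2 fun γ hγ => ?_
    have hhanf := (H _ (aleph0_le_beth γ) (ih γ hγ)).trans_le hle
    exact (cantor _).le.trans (two_power_lt_card_of_hanf_lt_beth hhanf).le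
  exact (lt_ord.1 hβlam).not_ge (hle.trans hbound)

theorem beth_lt_of_forall_hanf_lt {lam : Cardinal.{u}}
    (H : ∀ μ : Cardinal.{u}, ℵ₀ ≤ μ → μ < lam → hanf μ < lam)
    (hlam : ℵ₀ < lam) :
    ∀ α < lam.ord, ℶ_ α < lam := by
  intro α
  induction α using Ordinal.limitRecOn with
  | zero => exact fun _ => beth_zero ▸ hlam
  | add_one β ih =>
    intro hβ
    have hb := ih ((lt_add_one β).trans hβ)
    rw [beth_add_one]
    exact (two_power_lt_hanf _).trans (H _ (aleph0_le_beth β) hb)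
  | limit β hβ ih =>
    exact fun hβlam => beth_lt_of_isSuccLimit H hβ hβlam fun γ hγ => ih γ hγ (hγ.trans hβlam)

theorem eq_beth_ord_of_forall_beth_lt {lam : Cardinal.{u}} (hlam : ℵ₀ < lam)
    (h : ∀ α < lam.ord, ℶ_ α < lam) : lam = ℶ_ lam.ord :=
  (le_beth_ord lam).antisymm <|
    (isNormal_beth.le_iff_forall_le (isSuccLimit_ord hlam.le)).2 fun α hα => (h α hα).le

end Cardinal

/-- For an uncountable cardinal `λ`, `λ = ℶ_λ` iff for every infinite `μ < λ`,
the Hanf number `h(μ) = ℶ_{(2^μ)⁺}` is `< λ`. -/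
theorem stmt_1 (lam : Cardinal.{u}) (h : Cardinal.aleph0 < lam) :
    lam = Cardinal.beth lam.ord ↔
      ∀ μ : Cardinal.{u}, Cardinal.aleph0 ≤ μ → μ < lam →
        Cardinal.beth (Order.succ ((2 : Cardinal.{u}) ^ μ)).ord < lam :=
  ⟨fun hfix _ _ hμ => hanf_lt_of_eq_beth_ord h hfix hμ,
    fun H => eq_beth_ord_of_forall_beth_lt h (beth_lt_of_forall_hanf_lt H h)⟩
end

section
/- Let χ be an infinite cardinal, let I be a set with |I| ≥ χ, let T be a set, let f : I → T be a function, and let P be a family of subsets of I such that: (i) every S ∈ P satisfies |I \ S| < χ, and (ii) every S ∈ P is f-invariant, i.e. if b ∈ S, b' ∈ I and f(b') = f(b), then b' ∈ S. If |I| > χ + min(|P|, |T|) (cardinal addition and minimum), then there exists b ∈ I with b ∈ S for every S ∈ P. -/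
/-!
Call `b` exceptional if it lies outside some `S ∈ P`. The exceptional set is the union of the
complements `Sᶜ`, so it has size at most `|P| · χ`. It is also a union of at most `|T|` pieces,
one per fibre of `f`: by invariance, a fibre containing a point outside `S` lies entirely in `Sᶜ`,
so each piece has size at most `χ`. As `χ` is infinite, `min (|P|, |T|) · χ ≤ χ + min (|P|, |T|)`,
which is `< |I|`; hence some `b ∈ I` is not exceptional.
-/

universe u

open Cardinal

theorem Set.fiber_subset_compl_of_invariant {α β : Type*} {f : α → β} {S : Set α}
    (hS : ∀ a ∈ S, ∀ a', f a' = f a → a' ∈ S) {a : α} (ha : a ∉ S) : f ⁻¹' {f a} ⊆ Sᶜ :=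
  fun _ ha' ha'S => ha (hS _ ha'S a ha'.symm)

namespace Cardinal

variable {α β : Type u} {κ : Cardinal.{u}} {P : Set (Set α)}

theorem mk_biUnion_compl_le_mk_mul (hP : ∀ S ∈ P, #↥Sᶜ ≤ κ) : #↥(⋃ S ∈ P, Sᶜ) ≤ #P * κ :=
  (mk_biUnion_le _ P).trans <| by gcongr; exact ciSup_le' fun S => hP S.1 S.2

theorem mk_biUnion_compl_le_mk_codomain_mul (f : α → β)
    (hinv : ∀ S ∈ P, ∀ a ∈ S, ∀ a', f a' = f a → a' ∈ S) (hP : ∀ S ∈ P, #↥Sᶜ ≤ κ) :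
    #↥(⋃ S ∈ P, Sᶜ) ≤ #β * κ := by
  refine mk_le_mk_mul_of_mk_preimage_le (fun a : ↥(⋃ S ∈ P, Sᶜ) => f a) fun t => ?_
  rcases isEmpty_or_nonempty ↥((fun a : ↥(⋃ S ∈ P, Sᶜ) => f a) ⁻¹' {t}) with _ | ⟨⟨a, rfl⟩⟩
  · simp
  obtain ⟨S, hS, haS⟩ := Set.mem_iUnion₂.mp a.2
  calc #↥((fun a : ↥(⋃ S ∈ P, Sᶜ) => f a) ⁻¹' {f a})
      ≤ #↥(f ⁻¹' {f a}) := mk_preimage_of_injective _ _ Subtype.val_injective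
    _ ≤ #↥Sᶜ := mk_le_mk_of_subset (Set.fiber_subset_compl_of_invariant (hinv S hS) haS)
    _ ≤ κ := hP S hS

theorem mul_le_add_of_aleph0_le {c χ : Cardinal} (hχ : ℵ₀ ≤ χ) : c * χ ≤ χ + c := by
  rw [add_eq_max hχ, max_comm]
  exact mul_le_max_of_aleph0_le_right hχ

end Cardinal

theorem stmt_2_general {I T : Type u} (χ : Cardinal.{u}) (hχ : Cardinal.aleph0 ≤ χ)
    (f : I → T) (P : Set (Set I))
    (hcompl : ∀ S ∈ P, Cardinal.mk ↥Sᶜ < χ)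
    (hinv : ∀ S ∈ P, ∀ b ∈ S, ∀ b' : I, f b' = f b → b' ∈ S)
    (hbig : χ + min (Cardinal.mk ↥P) (Cardinal.mk T) < Cardinal.mk I) :
    ∃ b : I, ∀ S ∈ P, b ∈ S := by
  have hP : ∀ S ∈ P, #↥Sᶜ ≤ χ := fun S hS => (hcompl S hS).le
  have hsmall : #↥(⋃ S ∈ P, Sᶜ) < #I :=
    calc #↥(⋃ S ∈ P, Sᶜ) ≤ min #P #T * χ := by
          rcases min_choice #P #T with h | h <;> rw [h]
          · exact mk_biUnion_compl_le_mk_mul hP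
          · exact mk_biUnion_compl_le_mk_codomain_mul f hinv hP
      _ ≤ χ + min #P #T := mul_le_add_of_aleph0_le hχ
      _ < #I := hbig
  obtain ⟨b, hb⟩ := compl_nonempty_of_mk_lt_mk hsmall
  exact ⟨b, fun S hS => by_contra fun hbS => hb (Set.mem_biUnion hS hbS)⟩

/-- Combinatorial content of Lemma `average-realize`: if `|I| ≥ χ`, every `S ∈ P`
has complement of size `< χ` and is invariant under `f`, and
`|I| > χ + min(|P|, |T|)`, then some `b ∈ I` lies in every `S ∈ P`. -/
theorem stmt_2 {I T : Type u} (χ : Cardinal.{u}) (hχ : Cardinal.aleph0 ≤ χ)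
    (f : I → T) (P : Set (Set I))
    (hIχ : χ ≤ Cardinal.mk I)
    (hcompl : ∀ S ∈ P, Cardinal.mk ↥Sᶜ < χ)
    (hinv : ∀ S ∈ P, ∀ b ∈ S, ∀ b' : I, f b' = f b → b' ∈ S)
    (hbig : χ + min (Cardinal.mk ↥P) (Cardinal.mk T) < Cardinal.mk I) :
    ∃ b : I, ∀ S ∈ P, b ∈ S :=
  stmt_2_general χ hχ f P hcompl hinv hbig
end

section
/- Assume nf has right monotonicity and strong right transitivity. Then the relation ⫫* has strong right transitivity: for every set C ⊆ U, every M₁ ∈ K, and all sets A, B ⊆ U, if A ⫫*_C M₁ and A ⫫*_{M₁} B, then A ⫫*_C B. -/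
universe u

/-- `A ⫫*_C B`: there is a model `M₀ ∈ K` contained in `C` with `nf M₀ A B`. -/
def nfm {U : Type u} (K : Set (Set U)) (nf : Set U → Set U → Set U → Prop)
    (A C B : Set U) : Prop :=
  ∃ M₀ ∈ K, M₀ ⊆ C ∧ nf M₀ A B

/-- Proposition `nfm-basic`: if `nf` has right monotonicity and strong right
transitivity, then `⫫*` has strong right transitivity. -/
theorem stmt_4 {U : Type u} (K : Set (Set U)) (nf : Set U → Set U → Set U → Prop)
    (hrmono : ∀ M ∈ K, ∀ A B B₀ : Set U, nf M A B → B₀ ⊆ B → nf M A B₀)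
    (htrans : ∀ M₀ ∈ K, ∀ M₁ ∈ K, ∀ A B : Set U, nf M₀ A M₁ → nf M₁ A B → nf M₀ A B)
    (C : Set U) (M₁ : Set U) (hM₁ : M₁ ∈ K) (A B : Set U)
    (h1 : nfm K nf A C M₁) (h2 : nfm K nf A M₁ B) :
    nfm K nf A C B := by
  obtain ⟨M₀, hM₀K, hM₀C, hnf0⟩ := h1
  obtain ⟨M₂, hM₂K, hM₂M₁, hnf2⟩ := h2
  exact ⟨M₀, hM₀K, hM₀C,
    htrans M₀ hM₀K M₂ hM₂K A B (hrmono M₀ hM₀K A M₁ M₂ hnf0 hM₂M₁) hnf2⟩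
end

section
/- Assume nf has right monotonicity and strong right transitivity. Let A ⊆ U, let δ be a limit ordinal, and let ⟨M_i : i < δ⟩ and ⟨N_i : i < δ⟩ be ≤-increasing chains of models (i < j < δ implies M_i ≤ M_j and N_i ≤ N_j). Assume: (a) A ⫫*_{M_i} N_i for every i < δ; and (b) for every ≤-increasing chain ⟨P_j : j < cf(δ)⟩ of members of K there exists j < cf(δ) with nf(P_j, A, ⋃_{j' < cf(δ)} P_{j'}). Then A ⫫*_{M_δ} N_δ, where M_δ := ⋃_{i<δ} M_i and N_δ := ⋃_{i<δ} N_i. -/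
universe u

/-!
Choose a strictly increasing sequence `⟨g j : j < cf δ⟩` cofinal in `δ`. Chain local character,
applied to the chain `⟨N (g j) : j < cf δ⟩` (whose union is `N_δ`), gives `j` with
`nf (N (g j)) A N_δ`; hypothesis (a) at `g j` gives `M₀ ⊆ M (g j)` with `nf M₀ A (N (g j))`, and
strong right transitivity combines the two.
-/

open Set

theorem Ordinal.exists_cofinal_strictMonoOn (o : Ordinal) :
    ∃ g : Ordinal → Ordinal, StrictMonoOn g (Iio o.cof.ord) ∧ MapsTo g (Iio o.cof.ord) (Iio o) ∧
      ∀ i < o, ∃ j < o.cof.ord, i ≤ g j := by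
  obtain ⟨f, hf⟩ := exists_isFundamentalSeq (o := o) rfl
  classical
  let g : Ordinal → Ordinal := fun j ↦ if h : j < o.cof.ord then f ⟨j, h⟩ else 0
  have hg : ∀ j (h : j < o.cof.ord), g j = f ⟨j, h⟩ := fun j h ↦ dif_pos h
  refine ⟨g, fun i hi j hj hij ↦ ?_, fun j hj ↦ ?_, fun i hi ↦ ?_⟩
  · rw [hg i hi, hg j hj]
    exact hf.strictMono (show (⟨i, hi⟩ : Iio _) < ⟨j, hj⟩ from hij)
  · rw [hg j hj]
    exact (f _).2
  · obtain ⟨_, ⟨⟨j, hj⟩, rfl⟩, hij⟩ := hf.isCofinal_range ⟨i, hi⟩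
    exact ⟨j, hj, (hg j hj).symm ▸ hij⟩

section Chains

variable {α : Type*} {K : Set (Set α)} {le : Set α → Set α → Prop}

def IsChainBelow (le : Set α → Set α → Prop) (N : Ordinal → Set α) (δ : Ordinal) : Prop :=
  ∀ i j, i < j → j < δ → le (N i) (N j)

variable {N : Ordinal → Set α} {δ : Ordinal}

theorem IsChainBelow.comp (hN : IsChainBelow le N δ) {g : Ordinal → Ordinal} {c : Ordinal}
    (hg : StrictMonoOn g (Iio c)) (hgδ : MapsTo g (Iio c) (Iio δ)) :
    IsChainBelow le (N ∘ g) c :=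
  fun _ _ hij hj ↦ hN _ _ (hg (hij.trans hj) hj hij) (hgδ hj)

variable (hle : ∀ M P, le M P → M ∈ K ∧ P ∈ K ∧ M ⊆ P)
include hle

theorem IsChainBelow.mem_of_isSuccLimit (hN : IsChainBelow le N δ) (hδ : Order.IsSuccLimit δ)
    {i : Ordinal} (hi : i < δ) : N i ∈ K :=
  (hle _ _ (hN i _ (Order.lt_succ i) (hδ.succ_lt hi))).1

theorem IsChainBelow.subset (hN : IsChainBelow le N δ) {i j : Ordinal} (hij : i ≤ j)
    (hj : j < δ) : N i ⊆ N j := by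
  rcases hij.lt_or_eq with hij | rfl
  · exact (hle _ _ (hN i j hij hj)).2.2
  · exact Subset.rfl

theorem IsChainBelow.iUnion_comp_eq (hN : IsChainBelow le N δ) {g : Ordinal → Ordinal}
    {c : Ordinal} (hgδ : MapsTo g (Iio c) (Iio δ)) (hcof : ∀ i < δ, ∃ j < c, i ≤ g j) :
    ⋃ j < c, N (g j) = ⋃ i < δ, N i := by
  refine (iUnion₂_subset fun j (hj : j < c) ↦ ?_).antisymm (iUnion₂_subset fun i hi ↦ ?_)
  · exact subset_iUnion₂ (s := fun i (_ : i < δ) ↦ N i) _ (hgδ hj)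
  · obtain ⟨j, hj, hij⟩ := hcof i hi
    exact (hN.subset hle hij (hgδ hj)).trans
      (subset_iUnion₂ (s := fun j (_ : j < c) ↦ N (g j)) j hj)

end Chains

theorem nfm_of_nfm_of_nf {α : Type*} {K : Set (Set α)} {nf : Set α → Set α → Set α → Prop}
    (htrans : ∀ M₀ ∈ K, ∀ M₁ ∈ K, ∀ A B : Set α, nf M₀ A M₁ → nf M₁ A B → nf M₀ A B)
    {A B C C' N : Set α} (hN : N ∈ K) (hCN : nfm K nf A C N) (hNB : nf N A B) (hC : C ⊆ C') :
    nfm K nf A C' B := by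
  obtain ⟨M₀, hM₀K, hM₀C, hM₀N⟩ := hCN
  exact ⟨M₀, hM₀K, hM₀C.trans hC, htrans M₀ hM₀K N hN A B hM₀N hNB⟩

theorem stmt_5_general {U : Type u} (K : Set (Set U)) (nf : Set U → Set U → Set U → Prop)
    (le : Set U → Set U → Prop)
    (hle : ∀ M P : Set U, le M P → M ∈ K ∧ P ∈ K ∧ M ⊆ P)
    (htrans : ∀ M₀ ∈ K, ∀ M₁ ∈ K, ∀ A B : Set U, nf M₀ A M₁ → nf M₁ A B → nf M₀ A B)
    (A : Set U) (δ : Ordinal.{u}) (hδ : Order.IsSuccLimit δ)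
    (M N : Ordinal.{u} → Set U)
    (hN : ∀ i j : Ordinal.{u}, i < j → j < δ → le (N i) (N j))
    (ha : ∀ i < δ, nfm K nf A (M i) (N i))
    (hb : ∀ P : Ordinal.{u} → Set U,
      (∀ j < δ.cof.ord, P j ∈ K) →
      (∀ i j : Ordinal.{u}, i < j → j < δ.cof.ord → le (P i) (P j)) →
      ∃ j < δ.cof.ord, nf (P j) A (⋃ j' < δ.cof.ord, P j')) :
    nfm K nf A (⋃ i < δ, M i) (⋃ i < δ, N i) := by
  have hN : IsChainBelow le N δ := hN
  obtain ⟨g, hg, hgδ, hcof⟩ := Ordinal.exists_cofinal_strictMonoOn δ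
  have hK : ∀ j < δ.cof.ord, N (g j) ∈ K := fun j hj ↦ hN.mem_of_isSuccLimit hle hδ (hgδ hj)
  obtain ⟨j, hj, hnf⟩ := hb (N ∘ g) hK (hN.comp hg hgδ)
  rw [Function.comp_def, hN.iUnion_comp_eq hle hgδ hcof] at hnf
  exact nfm_of_nfm_of_nf htrans (hK j hj) (ha _ (hgδ hj)) hnf
    (subset_iUnion₂ (s := fun i (_ : i < δ) ↦ M i) _ (hgδ hj))

/-- Proposition `cont-prop`: continuity of `⫫*` along chains, assuming chain
local character for chains of length `cf δ`. -/
theorem stmt_5 {U : Type u} (K : Set (Set U)) (nf : Set U → Set U → Set U → Prop)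
    (le : Set U → Set U → Prop)
    (hle : ∀ M P : Set U, le M P → M ∈ K ∧ P ∈ K ∧ M ⊆ P)
    (hrmono : ∀ M ∈ K, ∀ A B B₀ : Set U, nf M A B → B₀ ⊆ B → nf M A B₀)
    (htrans : ∀ M₀ ∈ K, ∀ M₁ ∈ K, ∀ A B : Set U, nf M₀ A M₁ → nf M₁ A B → nf M₀ A B)
    (A : Set U) (δ : Ordinal.{u}) (hδ : Order.IsSuccLimit δ)
    (M N : Ordinal.{u} → Set U)
    (hM : ∀ i j : Ordinal.{u}, i < j → j < δ → le (M i) (M j))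
    (hN : ∀ i j : Ordinal.{u}, i < j → j < δ → le (N i) (N j))
    (ha : ∀ i < δ, nfm K nf A (M i) (N i))
    (hb : ∀ P : Ordinal.{u} → Set U,
      (∀ j < δ.cof.ord, P j ∈ K) →
      (∀ i j : Ordinal.{u}, i < j → j < δ.cof.ord → le (P i) (P j)) →
      ∃ j < δ.cof.ord, nf (P j) A (⋃ j' < δ.cof.ord, P j')) :
    nfm K nf A (⋃ i < δ, M i) (⋃ i < δ, N i) :=
  stmt_5_general K nf le hle htrans A δ hδ M N hN ha hb
end

section
/- Assume: (1) M ≤ P implies M ∈ K, P ∈ K and M ⊆ P; ≤ is coherent (M₀ ⊆ M₁, M₀ ≤ P and M₁ ≤ P imply M₀ ≤ M₁); and the whole universe U is a member of K; (2) nf has left monotonicity, right monotonicity, symmetry, and strong right transitivity; (3) (closure) λ₀ is an infinite cardinal and for every P ∈ K and every B ⊆ P there exists M with B ⊆ M ≤ P and |M| ≤ |B| + λ₀; (4) (chain local character for singletons) for every infinite regular cardinal δ, every ≤-increasing chain ⟨P_j : j < δ⟩ of members of K, and every a ∈ U, there exists j < δ with nf(P_j, {a}, ⋃_{j'<δ}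 P_{j'}); (5) (set local character at λ₀) θ is a regular cardinal with θ > λ₀ such that for every P ∈ K and every A ⊆ U with |A| ≤ λ₀ there exists M ≤ P with |M| < θ and nf(M, A, P). Then for every cardinal α, every set A ⊆ U with |A| ≤ α, and every N ∈ K, there exists M ≤ N with |M| < max(θ, α⁺) such that A ⫫*_M {b} for every b ∈ N. -/
/-!
Induction on `α`. For `α ≤ λ₀`, set local character over `N` already gives `M`. For `α > λ₀`,
write `A` as the union of `δ = cf α` pieces of size `< α` and absorb them into a `≤`-increasing
chain `⟨P_i : i < δ⟩` of models of size `< α`. The induction hypothesis gives some `M_i ≤ N` for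
each `P_i`, and `M` is the closure of `⋃ M_i` inside `N`. For `b ∈ N`, chain local character (`δ`
is regular) gives `j` with `{b}` independent from `⋃ P` over `P_j`, and transitivity through the
model `M₀ ⊆ M_j` witnessing `P_j ⫫* {b}` brings this down to `M₀`. Sizes stay below
`max(θ, α⁺)` because that cardinal is regular.
-/

universe u

open Cardinal Set

theorem Cardinal.mk_biUnion_lt_of_card_lt_cof {U : Type u} {c : Cardinal.{u}} {o : Ordinal.{u}}
    {s : Ordinal.{u} → Set U} (hc : ℵ₀ ≤ c) (ho : o.card < c.ord.cof)
    (hs : ∀ i < o, #(s i) < c) : #(⋃ i < o, s i) < c := by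
  have hIio : #(Iio o) = lift.{u + 1} o.card := mk_Iio_ordinal o
  refine (lift_lt.{u, u + 1}).1 <| (mk_biUnion_le_lift s (Iio o)).trans_lt
    (mul_lt_of_lt (aleph0_le_lift.{u, u + 1}.2 hc) ?_ ?_)
  · simpa [hIio, ← Ordinal.lift_card] using ho.trans_le (Ordinal.cof_ord_le c)
  · refine iSup_lt_of_lt_cof_ord ?_ fun i => lift_lt.2 (hs i i.2)
    simpa [hIio, ← Ordinal.lift_card, ← lift_ord, ← Ordinal.lift_cof] using ho

/-- The pieces are the initial segments of `A`, in an enumeration of length `α.ord`, cut at the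
points of a fundamental sequence of `α.ord`. -/
theorem Cardinal.exists_cover_mk_lt {U : Type u} {A : Set U} {α : Cardinal.{u}} (hα : ℵ₀ ≤ α)
    (hA : #A ≤ α) :
    ∃ S : Ordinal.{u} → Set U, (∀ i < α.ord.cof.ord, #(S i) < α) ∧
      A ⊆ ⋃ i < α.ord.cof.ord, S i := by
  obtain ⟨e⟩ : Nonempty (A ↪ α.ord.ToType) := (le_def _ _).1 (by simpa using hA)
  obtain ⟨f, hf⟩ := Ordinal.exists_isFundamentalSeq (o := α.ord) rfl
  refine ⟨fun i => Subtype.val '' {a | ∃ hi, e a ≤ Ordinal.ToType.mk (f ⟨i, hi⟩)}, ?_, ?_⟩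
  · intro i hi
    calc #(Subtype.val '' {a | ∃ hi, e a ≤ Ordinal.ToType.mk (f ⟨i, hi⟩)})
        ≤ #(e ⁻¹' Iic (Ordinal.ToType.mk (f ⟨i, hi⟩))) :=
          mk_image_le.trans (mk_le_mk_of_subset fun a ⟨_, ha⟩ => ha)
      _ ≤ #(Iic (Ordinal.ToType.mk (f ⟨i, hi⟩))) := mk_preimage_of_injective _ _ e.injective
      _ < α := by simpa using mk_Iic_lt (Ordinal.ToType.mk (f ⟨i, hi⟩)) (by simp) (by simpa)
  · intro a ha
    obtain ⟨_, ⟨i, rfl⟩, hai⟩ := hf.isCofinal_range (Ordinal.ToType.mk.symm (e ⟨a, ha⟩))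
    exact mem_iUnion₂.2 ⟨i, i.2, ⟨a, ha⟩, ⟨i.2, (OrderIso.symm_apply_le _).1 hai⟩, rfl⟩

theorem Cardinal.isRegular_max_succ {θ α : Cardinal.{u}} (hθ : θ.IsRegular) (hα : ℵ₀ ≤ α) :
    (max θ (Order.succ α)).IsRegular := by
  rcases max_choice θ (Order.succ α) with h | h <;> rw [h]
  exacts [hθ, isRegular_succ hα]

theorem nfm.mono {U : Type u} {K : Set (Set U)} {nf : Set U → Set U → Set U → Prop}
    {A C C' B : Set U} (h : nfm K nf A C B) (hC : C ⊆ C') : nfm K nf A C' B :=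
  let ⟨M₀, hM₀, hM₀C, hnf⟩ := h
  ⟨M₀, hM₀, hM₀C.trans hC, hnf⟩

section Independence

variable {U : Type u} {K : Set (Set U)} {nf : Set U → Set U → Set U → Prop}
  {le : Set U → Set U → Prop} {lam0 θ : Cardinal.{u}}

theorem exists_le_nfm_of_mk_le
    (hle : ∀ M P : Set U, le M P → M ∈ K ∧ P ∈ K ∧ M ⊆ P)
    (hrmono : ∀ M ∈ K, ∀ A B B₀ : Set U, nf M A B → B₀ ⊆ B → nf M A B₀)
    (hset : ∀ P ∈ K, ∀ A : Set U, #A ≤ lam0 → ∃ M : Set U, le M P ∧ #M < θ ∧ nf M A P)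
    {A N : Set U} (hA : #A ≤ lam0) (hN : N ∈ K) :
    ∃ M : Set U, le M N ∧ #M < θ ∧ ∀ b ∈ N, nfm K nf A M {b} := by
  obtain ⟨M, hMN, hMθ, hnf⟩ := hset N hN A hA
  have hM : M ∈ K := (hle M N hMN).1
  exact ⟨M, hMN, hMθ, fun b hb =>
    ⟨M, hM, subset_rfl, hrmono M hM A N {b} hnf (singleton_subset_iff.2 hb)⟩⟩

/-- Each `P i` is the closure, inside the universe model, of the earlier members together with the
`i`-th piece of `A`. -/
theorem exists_le_chain_cover
    (hcoh : ∀ M₀ M₁ P : Set U, M₀ ⊆ M₁ → le M₀ P → le M₁ P → le M₀ M₁)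
    (huniv : (univ : Set U) ∈ K)
    (hclosure : ∀ P ∈ K, ∀ B : Set U, B ⊆ P → ∃ M : Set U, B ⊆ M ∧ le M P ∧ #M ≤ #B + lam0)
    {α : Cardinal.{u}} (hα : ℵ₀ ≤ α) (hlam0 : lam0 < α) {A : Set U} (hA : #A ≤ α) :
    ∃ P : Ordinal.{u} → Set U, (∀ i j, i < j → le (P i) (P j)) ∧
      (∀ i < α.ord.cof.ord, #(P i) < α) ∧ A ⊆ ⋃ i < α.ord.cof.ord, P i := by
  obtain ⟨S, hS, hAS⟩ := exists_cover_mk_lt hα hA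
  choose cl hcl_sub hcl_le hcl_card using fun s : Set U => hclosure univ huniv s (subset_univ s)
  obtain ⟨P, hP⟩ : ∃ P : Ordinal.{u} → Set U, ∀ i, P i = cl ((⋃ j < i, P j) ∪ S i) :=
    ⟨fun i => Ordinal.lt_wf.fix (fun i ih => cl ((⋃ j, ⋃ h : j < i, ih j h) ∪ S i)) i,
      fun i => WellFounded.fix_eq _ _ _⟩
  have hsub : ∀ i, (⋃ j < i, P j) ∪ S i ⊆ P i := fun i => hP i ▸ hcl_sub _
  have hPle : ∀ i, le (P i) univ := fun i => hP i ▸ hcl_le _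
  have hmono : ∀ i j, i < j → P i ⊆ P j := fun i j h =>
    (subset_iUnion₂ (s := fun k (_ : k < j) => P k) i h).trans (subset_union_left.trans (hsub j))
  have hcard : ∀ i < α.ord.cof.ord, #(P i) < α := by
    intro i
    induction i using WellFoundedLT.induction with
    | _ i ih =>
      intro hi
      have hprev : #(⋃ j < i, P j) < α :=
        mk_biUnion_lt_of_card_lt_cof hα (lt_ord.1 hi) fun j hj => ih j hj (hj.trans hi)
      calc #(P i) ≤ #↥((⋃ j < i, P j) ∪ S i) + lam0 := hP i ▸ hcl_card _
        _ < α := add_lt_of_lt hα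
          ((mk_union_le _ _).trans_lt (add_lt_of_lt hα hprev (hS i hi))) hlam0
  exact ⟨P, fun i j h => hcoh _ _ _ (hmono i j h) (hPle i) (hPle j), hcard,
    hAS.trans (iUnion₂_mono fun i _ => subset_union_right.trans (hsub i))⟩

theorem nfm_of_le_chain
    (hle : ∀ M P : Set U, le M P → M ∈ K ∧ P ∈ K ∧ M ⊆ P)
    (hrmono : ∀ M ∈ K, ∀ A B B₀ : Set U, nf M A B → B₀ ⊆ B → nf M A B₀)
    (hsym : ∀ M ∈ K, ∀ A B : Set U, nf M A B → nf M B A)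
    (htrans : ∀ M₀ ∈ K, ∀ M₁ ∈ K, ∀ A B : Set U, nf M₀ A M₁ → nf M₁ A B → nf M₀ A B)
    (hchain : ∀ δ : Cardinal.{u}, δ.IsRegular →
      ∀ P : Ordinal.{u} → Set U, (∀ j < δ.ord, P j ∈ K) →
        (∀ i j : Ordinal.{u}, i < j → j < δ.ord → le (P i) (P j)) →
        ∀ a : U, ∃ j < δ.ord, nf (P j) {a} (⋃ j' < δ.ord, P j'))
    {δ : Cardinal.{u}} (hδ : δ.IsRegular) {P : Ordinal.{u} → Set U}
    (hP : ∀ i j, i < j → le (P i) (P j)) {A M : Set U} (hA : A ⊆ ⋃ i < δ.ord, P i) {b : U}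
    (hb : ∀ i < δ.ord, nfm K nf (P i) M {b}) : nfm K nf A M {b} := by
  have hPK : ∀ i, P i ∈ K := fun i => (hle _ _ (hP i (i + 1) (lt_add_one i))).1
  obtain ⟨j, hj, hbj⟩ := hchain δ hδ P (fun j _ => hPK j) (fun i j h _ => hP i j h) b
  obtain ⟨M₀, hM₀, hM₀M, hnf⟩ := hb j hj
  have hb_union : nf M₀ {b} (⋃ i < δ.ord, P i) :=
    htrans M₀ hM₀ (P j) (hPK j) {b} _ (hsym M₀ hM₀ _ _ hnf) hbj
  exact ⟨M₀, hM₀, hM₀M, hsym M₀ hM₀ _ _ (hrmono M₀ hM₀ _ _ _ hb_union hA)⟩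

theorem exists_le_nfm_of_forall_lt
    (hle : ∀ M P : Set U, le M P → M ∈ K ∧ P ∈ K ∧ M ⊆ P)
    (hcoh : ∀ M₀ M₁ P : Set U, M₀ ⊆ M₁ → le M₀ P → le M₁ P → le M₀ M₁)
    (huniv : (univ : Set U) ∈ K)
    (hrmono : ∀ M ∈ K, ∀ A B B₀ : Set U, nf M A B → B₀ ⊆ B → nf M A B₀)
    (hsym : ∀ M ∈ K, ∀ A B : Set U, nf M A B → nf M B A)
    (htrans : ∀ M₀ ∈ K, ∀ M₁ ∈ K, ∀ A B : Set U, nf M₀ A M₁ → nf M₁ A B → nf M₀ A B)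
    (hlam0 : ℵ₀ ≤ lam0)
    (hclosure : ∀ P ∈ K, ∀ B : Set U, B ⊆ P → ∃ M : Set U, B ⊆ M ∧ le M P ∧ #M ≤ #B + lam0)
    (hchain : ∀ δ : Cardinal.{u}, δ.IsRegular →
      ∀ P : Ordinal.{u} → Set U, (∀ j < δ.ord, P j ∈ K) →
        (∀ i j : Ordinal.{u}, i < j → j < δ.ord → le (P i) (P j)) →
        ∀ a : U, ∃ j < δ.ord, nf (P j) {a} (⋃ j' < δ.ord, P j'))
    (hθ : θ.IsRegular) (hth_lam : lam0 < θ) {α : Cardinal.{u}} (hα : lam0 < α)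
    (ih : ∀ β < α, ∀ A : Set U, #A ≤ β → ∀ N ∈ K,
      ∃ M : Set U, le M N ∧ #M < max θ (Order.succ β) ∧ ∀ b ∈ N, nfm K nf A M {b})
    {A N : Set U} (hA : #A ≤ α) (hN : N ∈ K) :
    ∃ M : Set U, le M N ∧ #M < max θ (Order.succ α) ∧ ∀ b ∈ N, nfm K nf A M {b} := by
  have hα0 : ℵ₀ ≤ α := hlam0.trans hα.le
  obtain ⟨P, hPle, hPcard, hAP⟩ := exists_le_chain_cover hcoh huniv hclosure hα0 hα hA
  have hbase : ∀ i < α.ord.cof.ord, ∃ M : Set U, le M N ∧ #M < max θ (Order.succ α) ∧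
      ∀ b ∈ N, nfm K nf (P i) M {b} := fun i hi =>
    let ⟨M, hMN, hMcard, hMnf⟩ := ih _ (hPcard i hi) (P i) le_rfl N hN
    ⟨M, hMN, hMcard.trans_le (max_le_max le_rfl (Order.succ_le_succ (hPcard i hi).le)), hMnf⟩
  choose! M hMN hMcard hMnf using hbase
  obtain ⟨M', hMM', hM'N, hM'card⟩ := hclosure N hN (⋃ i < α.ord.cof.ord, M i)
    (iUnion₂_subset fun i hi => (hle _ _ (hMN i hi)).2.2)
  refine ⟨M', hM'N, ?_, fun b hb =>
    nfm_of_le_chain hle hrmono hsym htrans hchain (isRegular_cof (isSuccLimit_ord hα0)) hPle hAP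
      fun i hi => (hMnf i hi b hb).mono ((subset_iUnion₂ (s := fun i _ => M i) i hi).trans hMM')⟩
  have hμ := isRegular_max_succ hθ hα0
  have hδμ : (α.ord.cof.ord).card < (max θ (Order.succ α)).ord.cof := by
    rw [card_ord, hμ.cof_ord]
    exact (Ordinal.cof_ord_le α).trans_lt ((Order.lt_succ α).trans_le (le_max_right _ _))
  calc #M' ≤ #(⋃ i < α.ord.cof.ord, M i) + lam0 := hM'card
    _ < max θ (Order.succ α) := add_lt_of_lt hμ.aleph0_le
      (mk_biUnion_lt_of_card_lt_cof hμ.aleph0_le hδμ hMcard) (hth_lam.trans_le (le_max_left _ _))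

end Independence

theorem stmt_6_general {U : Type u} (K : Set (Set U)) (nf : Set U → Set U → Set U → Prop)
    (le : Set U → Set U → Prop)
    (hle : ∀ M P : Set U, le M P → M ∈ K ∧ P ∈ K ∧ M ⊆ P)
    (hcoh : ∀ M₀ M₁ P : Set U, M₀ ⊆ M₁ → le M₀ P → le M₁ P → le M₀ M₁)
    (huniv : (Set.univ : Set U) ∈ K)
    (hrmono : ∀ M ∈ K, ∀ A B B₀ : Set U, nf M A B → B₀ ⊆ B → nf M A B₀)
    (hsym : ∀ M ∈ K, ∀ A B : Set U, nf M A B → nf M B A)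
    (htrans : ∀ M₀ ∈ K, ∀ M₁ ∈ K, ∀ A B : Set U, nf M₀ A M₁ → nf M₁ A B → nf M₀ A B)
    (lam0 : Cardinal.{u}) (hlam0 : Cardinal.aleph0 ≤ lam0)
    (hclosure : ∀ P ∈ K, ∀ B : Set U, B ⊆ P →
      ∃ M : Set U, B ⊆ M ∧ le M P ∧ Cardinal.mk ↥M ≤ Cardinal.mk ↥B + lam0)
    (hchain : ∀ δ : Cardinal.{u}, δ.IsRegular →
      ∀ P : Ordinal.{u} → Set U, (∀ j < δ.ord, P j ∈ K) →
        (∀ i j : Ordinal.{u}, i < j → j < δ.ord → le (P i) (P j)) →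
        ∀ a : U, ∃ j < δ.ord, nf (P j) {a} (⋃ j' < δ.ord, P j'))
    (θ : Cardinal.{u}) (hθ : θ.IsRegular) (hth_lam : lam0 < θ)
    (hset : ∀ P ∈ K, ∀ A : Set U, Cardinal.mk ↥A ≤ lam0 →
      ∃ M : Set U, le M P ∧ Cardinal.mk ↥M < θ ∧ nf M A P) :
    ∀ α : Cardinal.{u}, ∀ A : Set U, Cardinal.mk ↥A ≤ α → ∀ N ∈ K,
      ∃ M : Set U, le M N ∧ Cardinal.mk ↥M < max θ (Order.succ α) ∧
        ∀ b ∈ N, nfm K nf A M {b} := by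
  intro α
  induction α using WellFoundedLT.induction with
  | _ α ih =>
    intro A hA N hN
    rcases le_or_gt α lam0 with hα | hα
    · obtain ⟨M, hMN, hMθ, hMnf⟩ := exists_le_nfm_of_mk_le hle hrmono hset (hA.trans hα) hN
      exact ⟨M, hMN, hMθ.trans_le (le_max_left _ _), hMnf⟩
    · exact exists_le_nfm_of_forall_lt hle hcoh huniv hrmono hsym htrans hlam0 hclosure hchain
        hθ hth_lam hα ih hA hN

/-- Lemma `local-character-finite`: from chain local character for singletons and
set local character at `lam0`, every set `A` of size `≤ α` is, over some `M ≤ N` of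
size `< max(θ, α⁺)`, `⫫*`-independent from every singleton of `N`. -/
theorem stmt_6 {U : Type u} (K : Set (Set U)) (nf : Set U → Set U → Set U → Prop)
    (le : Set U → Set U → Prop)
    (hle : ∀ M P : Set U, le M P → M ∈ K ∧ P ∈ K ∧ M ⊆ P)
    (hcoh : ∀ M₀ M₁ P : Set U, M₀ ⊆ M₁ → le M₀ P → le M₁ P → le M₀ M₁)
    (huniv : (Set.univ : Set U) ∈ K)
    (hlmono : ∀ M ∈ K, ∀ A A₀ B : Set U, nf M A B → A₀ ⊆ A → nf M A₀ B)
    (hrmono : ∀ M ∈ K, ∀ A B B₀ : Set U, nf M A B → B₀ ⊆ B → nf M A B₀)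
    (hsym : ∀ M ∈ K, ∀ A B : Set U, nf M A B → nf M B A)
    (htrans : ∀ M₀ ∈ K, ∀ M₁ ∈ K, ∀ A B : Set U, nf M₀ A M₁ → nf M₁ A B → nf M₀ A B)
    (lam0 : Cardinal.{u}) (hlam0 : Cardinal.aleph0 ≤ lam0)
    (hclosure : ∀ P ∈ K, ∀ B : Set U, B ⊆ P →
      ∃ M : Set U, B ⊆ M ∧ le M P ∧ Cardinal.mk ↥M ≤ Cardinal.mk ↥B + lam0)
    (hchain : ∀ δ : Cardinal.{u}, δ.IsRegular →
      ∀ P : Ordinal.{u} → Set U, (∀ j < δ.ord, P j ∈ K) →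
        (∀ i j : Ordinal.{u}, i < j → j < δ.ord → le (P i) (P j)) →
        ∀ a : U, ∃ j < δ.ord, nf (P j) {a} (⋃ j' < δ.ord, P j'))
    (θ : Cardinal.{u}) (hθ : θ.IsRegular) (hth_lam : lam0 < θ)
    (hset : ∀ P ∈ K, ∀ A : Set U, Cardinal.mk ↥A ≤ lam0 →
      ∃ M : Set U, le M P ∧ Cardinal.mk ↥M < θ ∧ nf M A P) :
    ∀ α : Cardinal.{u}, ∀ A : Set U, Cardinal.mk ↥A ≤ α → ∀ N ∈ K,
      ∃ M : Set U, le M N ∧ Cardinal.mk ↥M < max θ (Order.succ α) ∧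
        ∀ b ∈ N, nfm K nf A M {b} :=
  stmt_6_general K nf le hle hcoh huniv hrmono hsym htrans lam0 hlam0 hclosure hchain θ hθ hth_lam
    hset
end

section
/- Assume: (1) M ≤ P implies M ∈ K, P ∈ K and M ⊆ P, and ≤ is coherent (M₀ ⊆ M₁, M₀ ≤ P and M₁ ≤ P imply M₀ ≤ M₁); (2) nf has right monotonicity; (3) λ is an infinite cardinal and (closure) for every P ∈ K and every B ⊆ P there exists M with B ⊆ M ≤ P and |M| ≤ |B| + λ; (4) (λ-model-witness property) for all M₀, M' ∈ K with M₀ ≤ M' and every A ⊆ U, if nf(M₀, A, B₀) holds for every B₀ ⊆ M' with |B₀| ≤ λ, then nf(M₀, A, M'). Let μ be a regular cardinal with μ > λ, let M ∈ K and A ⊆ U, and suppose that for every M₀ ≤ M with |M₀| < μ we have ¬nf(M₀, A, M). Then there exists a ≤-increasing chain ⟨M_i : i < μ⟩ with M_i ≤ M and |M_i| < μ for every i < μ, such that for every i < μ one has ¬nf(M_i, A, M_{i+1}), and consequently ¬nf(M_i, A, ⋃_{j<μ} M_j). -/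
universe u

/-!
For each small `N ≤ M` the λ-model-witness property turns `¬ nf N A M` into a set `Bad N ⊆ M`
of size `≤ λ` with `¬ nf N A (Bad N)`. Build the chain by transfinite recursion,
`M_i = cl (⋃_{j<i} (M_j ∪ Bad M_j))`, where `cl` is the closure inside `M`. Regularity of `μ > λ`
keeps every `M_i` of size `< μ`; since `Bad M_i ⊆ M_{i+1}`, right monotonicity turns
`¬ nf M_i A (Bad M_i)` into forking over `M_{i+1}` and over the union of the chain.
-/

open Cardinal Set

theorem Cardinal.mk_biUnion_Iio_lt_of_isRegular {U : Type u} {μ : Cardinal.{u}} (hμ : μ.IsRegular)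
    {f : Ordinal.{u} → Set U} {i : Ordinal.{u}} (hi : i < μ.ord) (hf : ∀ j < i, #(f j) < μ) :
    #(⋃ j < i, f j) < μ := by
  have himage : #(f '' Iio i) < μ := by
    have h := (mk_image_le_lift (f := f) (s := Iio i)).trans_eq (congrArg lift (mk_Iio_ordinal i))
    rw [lift_lift, lift_le] at h
    exact h.trans_lt (lt_ord.1 hi)
  have hunion : (⋃ j < i, f j) = ⋃ s ∈ f '' Iio i, s := by
    rw [← sUnion_eq_biUnion, sUnion_image]; rfl
  rw [hunion, card_biUnion_lt_iff_forall_of_isRegular hμ himage]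
  rintro _ ⟨j, hj, rfl⟩
  exact hf j hj

noncomputable def ordChain {U : Type u} (Clo Step : Set U → Set U) : Ordinal.{u} → Set U :=
  Ordinal.lt_wf.fix fun i chain => Clo (⋃ j : Iio i, Step (chain j j.2))

section ordChain

variable {U : Type u} {Clo Step : Set U → Set U}

theorem ordChain_eq (i : Ordinal.{u}) :
    ordChain Clo Step i = Clo (⋃ j < i, Step (ordChain Clo Step j)) := by
  rw [ordChain, Ordinal.lt_wf.fix_eq, iUnion_subtype]; rfl

theorem step_inter_subset_ordChain {S : Set U} (hClo : ∀ B, B ∩ S ⊆ Clo B) {i j : Ordinal.{u}}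
    (hij : i < j) : Step (ordChain Clo Step i) ∩ S ⊆ ordChain Clo Step j := by
  rw [ordChain_eq j]
  exact (inter_subset_inter_left S
    (subset_biUnion_of_mem (u := fun k => Step (ordChain Clo Step k)) hij)).trans (hClo _)

theorem mk_ordChain_lt {μ : Cardinal.{u}} (hμ : μ.IsRegular)
    (hClo : ∀ B : Set U, #B < μ → #(Clo B) < μ) (hStep : ∀ N : Set U, #N < μ → #(Step N) < μ)
    {i : Ordinal.{u}} (hi : i < μ.ord) :
    #(ordChain Clo Step i) < μ := by
  induction i using WellFoundedLT.induction with
  | ind i ih =>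
    rw [ordChain_eq i]
    exact hClo _ <| mk_biUnion_Iio_lt_of_isRegular hμ hi fun j hj =>
      hStep _ (ih j hj (hj.trans hi))

end ordChain

theorem exists_small_forking_subset {U : Type u} {nf : Set U → Set U → Set U → Prop}
    {le : Set U → Set U → Prop} {lam μ : Cardinal.{u}} {M A : Set U}
    (hwitness : ∀ N, le N M → (∀ B₀ ⊆ M, #B₀ ≤ lam → nf N A B₀) → nf N A M)
    (hfork : ∀ N, le N M → #N < μ → ¬ nf N A M) (N : Set U) :
    ∃ B₀ ⊆ M, #B₀ ≤ lam ∧ (le N M → #N < μ → ¬ nf N A B₀) := by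
  by_cases hN : le N M ∧ #N < μ
  · by_contra! h
    exact hfork N hN.1 hN.2 (hwitness N hN.1 fun B₀ hB₀ hcard => (h B₀ hB₀ hcard).2.2)
  · exact ⟨∅, empty_subset M, by simp, fun h₁ h₂ => (hN ⟨h₁, h₂⟩).elim⟩

theorem stmt_7_general {U : Type u} (K : Set (Set U)) (nf : Set U → Set U → Set U → Prop)
    (le : Set U → Set U → Prop)
    (hle : ∀ M P : Set U, le M P → M ∈ K ∧ P ∈ K ∧ M ⊆ P)
    (hcoh : ∀ M₀ M₁ P : Set U, M₀ ⊆ M₁ → le M₀ P → le M₁ P → le M₀ M₁)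
    (hrmono : ∀ M ∈ K, ∀ A B B₀ : Set U, nf M A B → B₀ ⊆ B → nf M A B₀)
    (lam : Cardinal.{u})
    (hclosure : ∀ P ∈ K, ∀ B : Set U, B ⊆ P →
      ∃ M : Set U, B ⊆ M ∧ le M P ∧ Cardinal.mk ↥M ≤ Cardinal.mk ↥B + lam)
    (hwitness : ∀ M₀ M' : Set U, le M₀ M' → ∀ A : Set U,
      (∀ B₀ : Set U, B₀ ⊆ M' → Cardinal.mk ↥B₀ ≤ lam → nf M₀ A B₀) → nf M₀ A M')
    (μ : Cardinal.{u}) (hμ : μ.IsRegular) (hmu_lam : lam < μ)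
    (M : Set U) (hM : M ∈ K) (A : Set U)
    (hfork : ∀ M₀ : Set U, le M₀ M → Cardinal.mk ↥M₀ < μ → ¬ nf M₀ A M) :
    ∃ Mc : Ordinal.{u} → Set U,
      (∀ i j : Ordinal.{u}, i < j → j < μ.ord → le (Mc i) (Mc j)) ∧
      (∀ i < μ.ord, le (Mc i) M ∧ Cardinal.mk ↥(Mc i) < μ) ∧
      (∀ i < μ.ord, ¬ nf (Mc i) A (Mc (i + 1))) ∧
      (∀ i < μ.ord, ¬ nf (Mc i) A (⋃ j < μ.ord, Mc j)) := by
  choose Bad hBad_sub hBad_card hBad_fork using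
    exists_small_forking_subset (fun N hN => hwitness N M hN A) hfork
  choose Clo hClo_sub hClo_le hClo_card using
    fun B : Set U => hclosure M hM (B ∩ M) inter_subset_right
  set Mc := ordChain Clo (fun N => N ∪ Bad N)
  have hMc_le : ∀ i, le (Mc i) M := fun i => by simp only [Mc, ordChain_eq i, hClo_le]
  have hMc_step : ∀ i j, i < j → Mc i ∪ Bad (Mc i) ⊆ Mc j := fun i j hij => by
    have hsub : Mc i ∪ Bad (Mc i) ⊆ M := union_subset (hle _ _ (hMc_le i)).2.2 (hBad_sub _)
    exact (subset_inter Subset.rfl hsub).trans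
      (step_inter_subset_ordChain (Step := fun N => N ∪ Bad N) hClo_sub hij)
  have hMc_card : ∀ i < μ.ord, #(Mc i) < μ := by
    refine fun i hi => mk_ordChain_lt hμ (fun B hB => ?_) (fun N hN => ?_) hi
    · exact (hClo_card B).trans_lt <| add_lt_of_lt hμ.aleph0_le
        ((mk_le_mk_of_subset inter_subset_left).trans_lt hB) hmu_lam
    · exact (mk_union_le _ _).trans_lt <|
        add_lt_of_lt hμ.aleph0_le hN ((hBad_card N).trans_lt hmu_lam)
  have hMc_fork : ∀ i < μ.ord, ∀ X, Bad (Mc i) ⊆ X → ¬ nf (Mc i) A X := fun i hi X hX hnf =>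
    hBad_fork _ (hMc_le i) (hMc_card i hi) (hrmono _ (hle _ _ (hMc_le i)).1 A _ _ hnf hX)
  have hsucc_sub : ∀ i, Bad (Mc i) ⊆ Mc (i + 1) := fun i =>
    subset_union_right.trans (hMc_step i _ (lt_add_one i))
  refine ⟨Mc, fun i j hij _ => ?_, fun i hi => ⟨hMc_le i, hMc_card i hi⟩,
    fun i hi => hMc_fork i hi _ (hsucc_sub i), fun i hi => hMc_fork i hi _ ?_⟩
  · exact hcoh _ _ _ (subset_union_left.trans (hMc_step i j hij)) (hMc_le i) (hMc_le j)
  · have hsucc : i + 1 < μ.ord := (isSuccLimit_ord hμ.aleph0_le).succ_lt hi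
    exact (hsucc_sub i).trans (subset_biUnion_of_mem (u := Mc) hsucc)

/-- Core of Proposition `barleq-prop`(2): from failure of set local character below
a regular `μ > λ` one builds a `≤`-increasing chain of length `μ` of small
submodels of `M` witnessing the failure of chain local character. -/
theorem stmt_7 {U : Type u} (K : Set (Set U)) (nf : Set U → Set U → Set U → Prop)
    (le : Set U → Set U → Prop)
    (hle : ∀ M P : Set U, le M P → M ∈ K ∧ P ∈ K ∧ M ⊆ P)
    (hcoh : ∀ M₀ M₁ P : Set U, M₀ ⊆ M₁ → le M₀ P → le M₁ P → le M₀ M₁)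
    (hrmono : ∀ M ∈ K, ∀ A B B₀ : Set U, nf M A B → B₀ ⊆ B → nf M A B₀)
    (lam : Cardinal.{u}) (hlam : Cardinal.aleph0 ≤ lam)
    (hclosure : ∀ P ∈ K, ∀ B : Set U, B ⊆ P →
      ∃ M : Set U, B ⊆ M ∧ le M P ∧ Cardinal.mk ↥M ≤ Cardinal.mk ↥B + lam)
    (hwitness : ∀ M₀ M' : Set U, le M₀ M' → ∀ A : Set U,
      (∀ B₀ : Set U, B₀ ⊆ M' → Cardinal.mk ↥B₀ ≤ lam → nf M₀ A B₀) → nf M₀ A M')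
    (μ : Cardinal.{u}) (hμ : μ.IsRegular) (hmu_lam : lam < μ)
    (M : Set U) (hM : M ∈ K) (A : Set U)
    (hfork : ∀ M₀ : Set U, le M₀ M → Cardinal.mk ↥M₀ < μ → ¬ nf M₀ A M) :
    ∃ Mc : Ordinal.{u} → Set U,
      (∀ i j : Ordinal.{u}, i < j → j < μ.ord → le (Mc i) (Mc j)) ∧
      (∀ i < μ.ord, le (Mc i) M ∧ Cardinal.mk ↥(Mc i) < μ) ∧
      (∀ i < μ.ord, ¬ nf (Mc i) A (Mc (i + 1))) ∧
      (∀ i < μ.ord, ¬ nf (Mc i) A (⋃ j < μ.ord, Mc j)) :=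
  stmt_7_general K nf le hle hcoh hrmono lam hclosure hwitness μ hμ hmu_lam M hM A hfork
end

section
/- Assume: (1) M ≤ P implies M ∈ K, P ∈ K and M ⊆ P, and M ≤ M for every M ∈ K; (2) nf has right monotonicity, symmetry, and strong right transitivity; (3) δ ≤ μ are infinite regular cardinals; (4) (chain local character for singletons at δ and at μ) for δ' ∈ {δ, μ}, every ≤-increasing chain ⟨P_j : j < δ'⟩ of members of K, and every a ∈ U, there exists j < δ' with nf(P_j, {a}, ⋃_{j'<δ'} P_{j'}). Let ⟨X_i : i < δ⟩ be subsets of U and let ⟨N_i^α : i < δ, α < μ⟩ be members of K such that: for each i < δ the chain ⟨N_i^α : α < μ⟩ is ≤-increasing; for each α < μ the chain ⟨N_i^α : i < δ⟩ is ≤-increasing; for each i < δ the union N_i^μ := ⋃_{α<μ} N_i^α is a member of K and ⟨N_i^μ : i < δ⟩ is ≤-increasing; and for all α < μ, i < δ, and a ∈ X_i, (⋃_{j<δ} N_j^α) ⫫*_{N_i^{α+1}} {a}. Then for every i < δ and every a ∈ X_i, (⋃_{j<δ} N_j^μ) ⫫*_{N_i^μ} {a}. -/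
universe u

/-!
Take the witness `M ⊆ N_i^{α₀+1}` of `(⋃_j N_j^{α₀}) ⫫*_{N_i^{α₀+1}} {a}`, where `α₀` is chosen
by local character twice: first `j₀ < δ` with `{a} ⫫_{N_{j₀}^μ} ⋃_j N_j^μ`, then `α₀ < μ` with
`{a} ⫫_{N_{j₀}^{α₀}} N_{j₀}^μ`. Since `N_{j₀}^{α₀} ⊆ ⋃_j N_j^{α₀}`, symmetry, monotonicity and
transitivity push the independence over `M` up to `N_{j₀}^μ` and then to `⋃_j N_j^μ`.
-/

theorem mem_of_le_chain {U ι : Type*} [LinearOrder ι] [SuccOrder ι] [NoMaxOrder ι]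
    {K : Set (Set U)} {le : Set U → Set U → Prop}
    (hle : ∀ M P : Set U, le M P → M ∈ K ∧ P ∈ K ∧ M ⊆ P)
    {P : ι → Set U} {o : ι} (ho : Order.IsSuccLimit o)
    (hP : ∀ α β : ι, α < β → β < o → le (P α) (P β)) {α : ι} (hα : α < o) : P α ∈ K :=
  (hle _ _ (hP α (Order.succ α) (Order.lt_succ α) (ho.succ_lt hα))).1

theorem nf_of_nf_of_subset_of_nf {U : Type*} {K : Set (Set U)}
    {nf : Set U → Set U → Set U → Prop}
    (hrmono : ∀ M ∈ K, ∀ A B B₀ : Set U, nf M A B → B₀ ⊆ B → nf M A B₀)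
    (hsym : ∀ M ∈ K, ∀ A B : Set U, nf M A B → nf M B A)
    (htrans : ∀ M₀ ∈ K, ∀ M₁ ∈ K, ∀ A B : Set U, nf M₀ A M₁ → nf M₁ A B → nf M₀ A B)
    {M P A B Q : Set U} (hM : M ∈ K) (hP : P ∈ K)
    (hBA : nf M B A) (hPB : P ⊆ B) (hAQ : nf P A Q) : nf M Q A :=
  hsym M hM _ _ <| htrans M hM P hP A Q (hrmono M hM A B P (hsym M hM B A hBA) hPB) hAQ

theorem stmt_8_general {U : Type u} (K : Set (Set U)) (nf : Set U → Set U → Set U → Prop)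
    (le : Set U → Set U → Prop)
    (hle : ∀ M P : Set U, le M P → M ∈ K ∧ P ∈ K ∧ M ⊆ P)
    (hrmono : ∀ M ∈ K, ∀ A B B₀ : Set U, nf M A B → B₀ ⊆ B → nf M A B₀)
    (hsym : ∀ M ∈ K, ∀ A B : Set U, nf M A B → nf M B A)
    (htrans : ∀ M₀ ∈ K, ∀ M₁ ∈ K, ∀ A B : Set U, nf M₀ A M₁ → nf M₁ A B → nf M₀ A B)
    (δ μ : Cardinal.{u}) (hμ : μ.IsRegular)
    (hchain : ∀ δ' : Cardinal.{u}, (δ' = δ ∨ δ' = μ) →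
      ∀ P : Ordinal.{u} → Set U, (∀ j < δ'.ord, P j ∈ K) →
        (∀ i j : Ordinal.{u}, i < j → j < δ'.ord → le (P i) (P j)) →
        ∀ a : U, ∃ j < δ'.ord, nf (P j) {a} (⋃ j' < δ'.ord, P j'))
    (X : Ordinal.{u} → Set U) (N : Ordinal.{u} → Ordinal.{u} → Set U)
    (hcol : ∀ i < δ.ord, ∀ α β : Ordinal.{u}, α < β → β < μ.ord → le (N i α) (N i β))
    (hNμK : ∀ i < δ.ord, (⋃ α < μ.ord, N i α) ∈ K)
    (hNμinc : ∀ i j : Ordinal.{u}, i < j → j < δ.ord →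
      le (⋃ α < μ.ord, N i α) (⋃ α < μ.ord, N j α))
    (hind : ∀ α < μ.ord, ∀ i < δ.ord, ∀ a ∈ X i,
      nfm K nf (⋃ j < δ.ord, N j α) (N i (α + 1)) {a}) :
    ∀ i < δ.ord, ∀ a ∈ X i,
      nfm K nf (⋃ j < δ.ord, ⋃ α < μ.ord, N j α) (⋃ α < μ.ord, N i α) {a} := by
  intro i hi a ha
  have hμlim : Order.IsSuccLimit μ.ord := Cardinal.isSuccLimit_ord hμ.aleph0_le
  obtain ⟨j₀, hj₀, hnf_rows⟩ :=
    hchain δ (Or.inl rfl) (fun j => ⋃ α < μ.ord, N j α) hNμK hNμinc a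
  have hcolK : ∀ α < μ.ord, N j₀ α ∈ K := fun α =>
    mem_of_le_chain hle hμlim (hcol j₀ hj₀)
  obtain ⟨α₀, hα₀, hnf_col⟩ := hchain μ (Or.inr rfl) (N j₀) hcolK (hcol j₀ hj₀) a
  obtain ⟨M, hMK, hMsub, hMnf⟩ := hind α₀ hα₀ i hi a ha
  have hnf_col_union : nf M (⋃ α < μ.ord, N j₀ α) {a} :=
    nf_of_nf_of_subset_of_nf hrmono hsym htrans hMK (hcolK α₀ hα₀) hMnf
      (Set.subset_iUnion₂ (s := fun j _ => N j α₀) j₀ hj₀) hnf_col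
  refine ⟨M, hMK, hMsub.trans ?_, ?_⟩
  · exact Set.subset_iUnion₂ (s := fun α _ => N i α) (α₀ + 1) (hμlim.add_one_lt hα₀)
  · exact nf_of_nf_of_subset_of_nf hrmono hsym htrans hMK (hNμK j₀ hj₀) hnf_col_union
      subset_rfl hnf_rows

/-- The Claim inside the proof of Lemma `union-sat-2`: in an array
`⟨N_i^α : i < δ, α < μ⟩` with the stated coherence and independence properties,
`(⋃_j N_j^μ) ⫫*_{N_i^μ} {a}` for every `i < δ` and `a ∈ X_i`. -/
theorem stmt_8 {U : Type u} (K : Set (Set U)) (nf : Set U → Set U → Set U → Prop)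
    (le : Set U → Set U → Prop)
    (hle : ∀ M P : Set U, le M P → M ∈ K ∧ P ∈ K ∧ M ⊆ P)
    (hrefl : ∀ M ∈ K, le M M)
    (hrmono : ∀ M ∈ K, ∀ A B B₀ : Set U, nf M A B → B₀ ⊆ B → nf M A B₀)
    (hsym : ∀ M ∈ K, ∀ A B : Set U, nf M A B → nf M B A)
    (htrans : ∀ M₀ ∈ K, ∀ M₁ ∈ K, ∀ A B : Set U, nf M₀ A M₁ → nf M₁ A B → nf M₀ A B)
    (δ μ : Cardinal.{u}) (hδ : δ.IsRegular) (hμ : μ.IsRegular) (hδμ : δ ≤ μ)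
    (hchain : ∀ δ' : Cardinal.{u}, (δ' = δ ∨ δ' = μ) →
      ∀ P : Ordinal.{u} → Set U, (∀ j < δ'.ord, P j ∈ K) →
        (∀ i j : Ordinal.{u}, i < j → j < δ'.ord → le (P i) (P j)) →
        ∀ a : U, ∃ j < δ'.ord, nf (P j) {a} (⋃ j' < δ'.ord, P j'))
    (X : Ordinal.{u} → Set U) (N : Ordinal.{u} → Ordinal.{u} → Set U)
    (hcol : ∀ i < δ.ord, ∀ α β : Ordinal.{u}, α < β → β < μ.ord → le (N i α) (N i β))
    (hrow : ∀ α < μ.ord, ∀ i j : Ordinal.{u}, i < j → j < δ.ord → le (N i α) (N j α))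
    (hNμK : ∀ i < δ.ord, (⋃ α < μ.ord, N i α) ∈ K)
    (hNμinc : ∀ i j : Ordinal.{u}, i < j → j < δ.ord →
      le (⋃ α < μ.ord, N i α) (⋃ α < μ.ord, N j α))
    (hind : ∀ α < μ.ord, ∀ i < δ.ord, ∀ a ∈ X i,
      nfm K nf (⋃ j < δ.ord, N j α) (N i (α + 1)) {a}) :
    ∀ i < δ.ord, ∀ a ∈ X i,
      nfm K nf (⋃ j < δ.ord, ⋃ α < μ.ord, N j α) (⋃ α < μ.ord, N i α) {a} :=
  stmt_8_general K nf le hle hrmono hsym htrans δ μ hμ hchain X N hcol hNμK hNμinc hind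
end
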